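/- If T and T' are distinct binary trees with n leaves, then the subgroup Λ_{T,T'} of ℤ×ℤ generated by { (ld_T(i)−ld_{T'}(i), rd_T(i)−rd_{T'}(i)) : 1 ≤ i ≤ n } has finite index in ℤ×ℤ (equivalently, it contains ℤ(k,0)+ℤ(0,ℓ) for some nonzero integers k, ℓ). In particular, no rank-one subgroup of ℤ×ℤ is of the form Λ_{T,T'} for distinct trees T ≠ T'. -/

import Mathlib

/-- Binary trees: every internal vertex has exactly a left and a right child. -/
inductive BTree : Type where
  | leaf : BTree
  | node : BTree → BTree → BTree

namespace BTree

/-- Number of leaves. -/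
def numLeaves : BTree → ℕ
  | leaf => 1
  | node l r => l.numLeaves + r.numLeaves

/-- Addresses of the leaves in left-to-right order, as words over `{0,1}`;
`false` records a left step (0) and `true` a right step (1). -/
def addrs : BTree → List (List Bool)
  | leaf => [[]]
  | node l r => (l.addrs.map (fun w => false :: w)) ++ (r.addrs.map (fun w => true :: w))

/-- Address of the `i`-th leaf (0-indexed, left to right). -/
def addr (T : BTree) (i : ℕ) : List Bool := T.addrs.getD i []

/-- Left depth of the `i`-th leaf: number of left steps (0's) in its address. -/
def ld (T : BTree) (i : ℕ) : ℕ := (T.addr i).count false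

/-- Right depth of the `i`-th leaf: number of right steps (1's) in its address. -/
def rd (T : BTree) (i : ℕ) : ℕ := (T.addr i).count true

/-- Total depth of the `i`-th leaf. -/
def depth (T : BTree) (i : ℕ) : ℕ := (T.addr i).length

end BTree

/-!
Read the leaves' addresses as words in `0 = left`, `1 = right`. Two adjacent leaves have
addresses `u 0 1^s` and `u 1 0^t`, and the first leaf has address `0^d`. So if `i` is the first
leaf at which the addresses in `T` and `T'` differ, they differ only in a trailing block of `0`s:
the generator at `i` is `(k, 0)` with `k ≠ 0`. Symmetrically, at the last differing leaf the
addresses differ only in a trailing block of `1`s, giving a generator `(0, ℓ)` with `ℓ ≠ 0`.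
Then `ℤk × ℤℓ ≤ Λ_{T,T'}`, which has finite index.
-/

theorem List.replicate_append_cons_inj {α : Type*} {a c : α} (hac : a ≠ c) {s s' : ℕ}
    {v v' : List α} (h : List.replicate s c ++ a :: v = List.replicate s' c ++ a :: v') :
    s = s' ∧ v = v' := by
  induction s generalizing s' with
  | zero => cases s' <;> simp_all [List.replicate_succ]
  | succ k ih =>
    cases s' with
    | zero => simp_all [List.replicate_succ, eq_comm]
    | succ k' => simpa using ih (by simpa [List.replicate_succ] using h)

theorem List.append_cons_replicate_inj {α : Type*} {a c : α} (hac : a ≠ c) {u u' : List α}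
    {s s' : ℕ} (h : u ++ a :: List.replicate s c = u' ++ a :: List.replicate s' c) :
    u = u' ∧ s = s' := by
  have h' := congrArg List.reverse h
  simp only [List.reverse_append, List.reverse_cons, List.reverse_replicate,
    List.append_assoc, List.singleton_append] at h'
  obtain ⟨hs, hu⟩ := List.replicate_append_cons_inj hac h'
  exact ⟨List.reverse_injective hu, hs⟩

namespace BTree

theorem numLeaves_pos (T : BTree) : 0 < T.numLeaves := by
  induction T with
  | leaf => exact Nat.one_pos
  | node l r ihl _ => simp only [numLeaves]; omega

theorem length_addrs (T : BTree) : T.addrs.length = T.numLeaves := by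
  induction T with
  | leaf => rfl
  | node l r ihl ihr => simp [addrs, numLeaves, ihl, ihr]

theorem addrs_injective : Function.Injective addrs := by
  intro T T' h
  induction T generalizing T' with
  | leaf =>
    cases T' with
    | leaf => rfl
    | node L' R' =>
      have hlen := congrArg List.length h
      simp only [length_addrs, numLeaves] at hlen
      have := L'.numLeaves_pos; have := R'.numLeaves_pos; omega
  | node L R ihL ihR =>
    cases T' with
    | leaf =>
      have hlen := congrArg List.length h
      simp only [length_addrs, numLeaves] at hlen
      have := L.numLeaves_pos; have := R.numLeaves_pos; omega
    | node L' R' =>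
      -- stripping a leading `false` (resp. `true`) recovers the addresses in the left
      -- (resp. right) subtree
      have hL := congrArg (List.filterMap fun w => match w with | false :: w => some w | _ => none) h
      have hR := congrArg (List.filterMap fun w => match w with | true :: w => some w | _ => none) h
      simp only [addrs, List.filterMap_append, List.filterMap_map, Function.comp_apply,
        List.filterMap_some, List.filterMap_none, List.append_nil, List.nil_append] at hL hR
      rw [ihL hL, ihR hR]

theorem addr_node_of_lt {L R : BTree} {i : ℕ} (h : i < L.numLeaves) :
    (node L R).addr i = false :: L.addr i := by
  rw [addr, addrs, List.getD_append _ _ _ _ (by simpa [length_addrs] using h)]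
  simp [addr, List.getD_eq_getElem?_getD, h, length_addrs]

theorem addr_node_add {L R : BTree} {j : ℕ} (h : j < R.numLeaves) :
    (node L R).addr (L.numLeaves + j) = true :: R.addr j := by
  rw [addr, addrs, List.getD_append_right _ _ _ _ (by simp [length_addrs])]
  simp [addr, List.getD_eq_getElem?_getD, h, length_addrs]

theorem addr_zero (T : BTree) : ∃ d, T.addr 0 = List.replicate d false := by
  induction T with
  | leaf => exact ⟨0, rfl⟩
  | node L R ihL _ =>
    obtain ⟨d, hd⟩ := ihL
    exact ⟨d + 1, by rw [addr_node_of_lt L.numLeaves_pos, hd, List.replicate_succ]⟩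

theorem addr_numLeaves_sub_one (T : BTree) :
    ∃ d, T.addr (T.numLeaves - 1) = List.replicate d true := by
  induction T with
  | leaf => exact ⟨0, rfl⟩
  | node L R _ ihR =>
    obtain ⟨d, hd⟩ := ihR
    have hR := R.numLeaves_pos
    have hlast : (node L R).numLeaves - 1 = L.numLeaves + (R.numLeaves - 1) := by
      simp only [numLeaves]; omega
    exact ⟨d + 1, by rw [hlast, addr_node_add (by omega), hd, List.replicate_succ]⟩

theorem exists_addr_eq_and_addr_succ_eq (T : BTree) {i : ℕ} (h : i + 1 < T.numLeaves) :
    ∃ u s t, T.addr i = u ++ false :: List.replicate s true ∧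
      T.addr (i + 1) = u ++ true :: List.replicate t false := by
  induction T generalizing i with
  | leaf => simp [numLeaves] at h
  | node L R ihL ihR =>
    simp only [numLeaves] at h
    rcases lt_trichotomy (i + 1) L.numLeaves with hlt | heq | hgt
    · obtain ⟨u, s, t, h₁, h₂⟩ := ihL hlt
      exact ⟨false :: u, s, t, by rw [addr_node_of_lt (by omega), h₁]; rfl,
        by rw [addr_node_of_lt hlt, h₂]; rfl⟩
    · obtain ⟨s, hs⟩ := L.addr_numLeaves_sub_one
      obtain ⟨t, ht⟩ := R.addr_zero
      have hi : i = L.numLeaves - 1 := by omega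
      refine ⟨[], s, t, ?_, ?_⟩
      · rw [addr_node_of_lt (by omega), hi, hs]; rfl
      · rw [heq, ← Nat.add_zero L.numLeaves, addr_node_add R.numLeaves_pos, ht]; rfl
    · obtain ⟨j, rfl⟩ := Nat.exists_eq_add_of_le (Nat.le_of_lt_succ hgt)
      obtain ⟨u, s, t, h₁, h₂⟩ := ihR (i := j) (by omega)
      refine ⟨true :: u, s, t, ?_, ?_⟩
      · rw [addr_node_add (by omega), h₁]; rfl
      · rw [Nat.add_assoc, addr_node_add (by omega), h₂]; rfl

theorem exists_addr_ne {T T' : BTree} {n : ℕ} (hT : T.numLeaves = n) (hT' : T'.numLeaves = n)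
    (hne : T ≠ T') : ∃ i < n, T.addr i ≠ T'.addr i := by
  by_contra! h
  refine hne (addrs_injective (List.ext_getElem (by simp [length_addrs, hT, hT']) ?_))
  intro i hi hi'
  have := h i (by simpa [length_addrs, hT] using hi)
  rwa [addr, addr, List.getD_eq_getElem _ _ hi, List.getD_eq_getElem _ _ hi'] at this

theorem rd_eq_and_ld_ne_of_addr_ne {T T' : BTree} {n i : ℕ} (hT : T.numLeaves = n)
    (hT' : T'.numLeaves = n) (hi : i < n) (hne : T.addr i ≠ T'.addr i)
    (hprev : ∀ j < i, T.addr j = T'.addr j) : T.rd i = T'.rd i ∧ T.ld i ≠ T'.ld i := by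
  cases i with
  | zero =>
    obtain ⟨d, hd⟩ := T.addr_zero
    obtain ⟨d', hd'⟩ := T'.addr_zero
    have hdd : d ≠ d' := by rintro rfl; exact hne (hd.trans hd'.symm)
    simp [ld, rd, hd, hd', List.count_replicate, hdd]
  | succ j =>
    obtain ⟨u, s, t, h₁, h₂⟩ := T.exists_addr_eq_and_addr_succ_eq (i := j) (by omega)
    obtain ⟨u', s', t', h₁', h₂'⟩ := T'.exists_addr_eq_and_addr_succ_eq (i := j) (by omega)
    obtain ⟨rfl, -⟩ := List.append_cons_replicate_inj (by decide)
      (h₁.symm.trans ((hprev j j.lt_succ_self).trans h₁'))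
    have htt : t ≠ t' := by rintro rfl; exact hne (h₂.trans h₂'.symm)
    simp [ld, rd, h₂, h₂', List.count_append, List.count_replicate, htt]

theorem ld_eq_and_rd_ne_of_addr_ne {T T' : BTree} {n i : ℕ} (hT : T.numLeaves = n)
    (hT' : T'.numLeaves = n) (hi : i < n) (hne : T.addr i ≠ T'.addr i)
    (hnext : ∀ j, i < j → j < n → T.addr j = T'.addr j) :
    T.ld i = T'.ld i ∧ T.rd i ≠ T'.rd i := by
  rcases Nat.lt_or_ge (i + 1) n with hlt | hge
  · obtain ⟨u, s, t, h₁, h₂⟩ := T.exists_addr_eq_and_addr_succ_eq (i := i) (by omega)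
    obtain ⟨u', s', t', h₁', h₂'⟩ := T'.exists_addr_eq_and_addr_succ_eq (i := i) (by omega)
    obtain ⟨rfl, -⟩ := List.append_cons_replicate_inj (by decide)
      (h₂.symm.trans ((hnext (i + 1) i.lt_succ_self hlt).trans h₂'))
    have hss : s ≠ s' := by rintro rfl; exact hne (h₁.trans h₁'.symm)
    simp [ld, rd, h₁, h₁', List.count_append, List.count_replicate, hss]
  · obtain ⟨d, hd⟩ := T.addr_numLeaves_sub_one
    obtain ⟨d', hd'⟩ := T'.addr_numLeaves_sub_one
    have hlast : i = n - 1 := by omega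
    rw [hT, ← hlast] at hd
    rw [hT', ← hlast] at hd'
    have hdd : d ≠ d' := by rintro rfl; exact hne (hd.trans hd'.symm)
    simp [ld, rd, hd, hd', List.count_replicate, hdd]

theorem exists_rd_eq_and_ld_ne {T T' : BTree} {n : ℕ} (hT : T.numLeaves = n)
    (hT' : T'.numLeaves = n) (hne : T ≠ T') : ∃ i < n, T.rd i = T'.rd i ∧ T.ld i ≠ T'.ld i := by
  have hex := exists_addr_ne hT hT' hne
  obtain ⟨hi, hdiff⟩ := Nat.find_spec hex
  refine ⟨_, hi, rd_eq_and_ld_ne_of_addr_ne hT hT' hi hdiff fun j hj => ?_⟩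
  by_contra h
  exact Nat.find_min hex hj ⟨hj.trans hi, h⟩

theorem exists_ld_eq_and_rd_ne {T T' : BTree} {n : ℕ} (hT : T.numLeaves = n)
    (hT' : T'.numLeaves = n) (hne : T ≠ T') : ∃ i < n, T.ld i = T'.ld i ∧ T.rd i ≠ T'.rd i := by
  obtain ⟨i₀, hi₀, hne₀⟩ := exists_addr_ne hT hT' hne
  let P : ℕ → Prop := fun i => i < n ∧ T.addr i ≠ T'.addr i
  obtain ⟨hi, hdiff⟩ : P (Nat.findGreatest P n) := Nat.findGreatest_spec hi₀.le ⟨hi₀, hne₀⟩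
  refine ⟨_, hi, ld_eq_and_rd_ne_of_addr_ne hT hT' hi hdiff fun j hj hjn => ?_⟩
  by_contra h
  exact Nat.findGreatest_is_greatest hj hjn.le ⟨hjn, h⟩

end BTree

theorem AddSubgroup.finiteIndex_of_mk_mem_of_mk_mem {H : AddSubgroup (ℤ × ℤ)} {k ℓ : ℤ}
    (hk : k ≠ 0) (hℓ : ℓ ≠ 0) (hk_mem : (k, 0) ∈ H) (hℓ_mem : (0, ℓ) ∈ H) : H.FiniteIndex := by
  have hle : (AddSubgroup.zmultiples k).prod (AddSubgroup.zmultiples ℓ) ≤ H := by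
    rintro ⟨x, y⟩ ⟨⟨a, rfl⟩, ⟨b, rfl⟩⟩
    have hxy : ((a • k, b • ℓ) : ℤ × ℤ) = a • (k, 0) + b • (0, ℓ) := by simp
    rw [hxy]
    exact H.add_mem (H.zsmul_mem hk_mem a) (H.zsmul_mem hℓ_mem b)
  have : ((AddSubgroup.zmultiples k).prod (AddSubgroup.zmultiples ℓ)).FiniteIndex :=
    ⟨by simp [AddSubgroup.index_prod, Int.index_zmultiples, hk, hℓ]⟩
  exact AddSubgroup.finiteIndex_of_le hle

/-- For distinct binary trees `T ≠ T'`, the subgroup `Λ_{T,T'} ≤ ℤ×ℤ` generated by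
the depth-difference pairs has finite index; equivalently, it contains `(k,0)` and
`(0,ℓ)` for some nonzero integers `k, ℓ`. In particular no rank-one subgroup of
`ℤ×ℤ` is of this form. -/
theorem stmt15 (T T' : BTree) (n : ℕ)
    (hT : T.numLeaves = n) (hT' : T'.numLeaves = n) (hne : T ≠ T') :
    (AddSubgroup.closure
        {p : ℤ × ℤ | ∃ i < n,
          p = ((T.ld i : ℤ) - (T'.ld i : ℤ), (T.rd i : ℤ) - (T'.rd i : ℤ))}).FiniteIndex ∧
    ∃ k ℓ : ℤ, k ≠ 0 ∧ ℓ ≠ 0 ∧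
      (k, (0 : ℤ)) ∈ AddSubgroup.closure
        {p : ℤ × ℤ | ∃ i < n,
          p = ((T.ld i : ℤ) - (T'.ld i : ℤ), (T.rd i : ℤ) - (T'.rd i : ℤ))} ∧
      ((0 : ℤ), ℓ) ∈ AddSubgroup.closure
        {p : ℤ × ℤ | ∃ i < n,
          p = ((T.ld i : ℤ) - (T'.ld i : ℤ), (T.rd i : ℤ) - (T'.rd i : ℤ))} := by
  set Λ := AddSubgroup.closure
    {p : ℤ × ℤ | ∃ i < n, p = ((T.ld i : ℤ) - (T'.ld i : ℤ), (T.rd i : ℤ) - (T'.rd i : ℤ))}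
  obtain ⟨i, hi, hrd, hld⟩ := BTree.exists_rd_eq_and_ld_ne hT hT' hne
  obtain ⟨j, hj, hld', hrd'⟩ := BTree.exists_ld_eq_and_rd_ne hT hT' hne
  have hk : (T.ld i : ℤ) - T'.ld i ≠ 0 := sub_ne_zero.mpr (by exact_mod_cast hld)
  have hℓ : (T.rd j : ℤ) - T'.rd j ≠ 0 := sub_ne_zero.mpr (by exact_mod_cast hrd')
  have hk_mem : ((T.ld i : ℤ) - T'.ld i, (0 : ℤ)) ∈ Λ :=
    AddSubgroup.subset_closure ⟨i, hi, by simp [hrd]⟩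
  have hℓ_mem : ((0 : ℤ), (T.rd j : ℤ) - T'.rd j) ∈ Λ :=
    AddSubgroup.subset_closure ⟨j, hj, by simp [hld']⟩
  exact ⟨AddSubgroup.finiteIndex_of_mk_mem_of_mk_mem hk hℓ hk_mem hℓ_mem,
    _, _, hk, hℓ, hk_mem, hℓ_mem⟩
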